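/- Let f ∈ ℤ[x] be monic and irreducible of degree d ≥ 2 such that f splits into linear factors over K := ℚ[x]/⟨f⟩ (i.e., f is Galois), and let p be a prime not dividing the discriminant δ_f of f. Then the reduction f̄ ∈ 𝔽_p[x] is squarefree, and all monic irreducible factors of f̄ in 𝔽_p[x] have the same degree. -/

import Mathlib

open Polynomial NumberField

/-- The Sylvester matrix of two polynomials `f`, `g` (of degrees `n := f.natDegree` and
`m := g.natDegree`). -/
noncomputable def sylvesterMatrix {R : Type*} [CommRing R] (f g : R[X]) :
    Matrix (Fin (g.natDegree + f.natDegree)) (Fin (g.natDegree + f.natDegree)) R :=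
  fun i j =>
    if (j : ℕ) < g.natDegree then
      (if (j : ℕ) ≤ (i : ℕ) then f.coeff ((i : ℕ) - (j : ℕ)) else 0)
    else
      (if (j : ℕ) - g.natDegree ≤ (i : ℕ) then g.coeff ((i : ℕ) - ((j : ℕ) - g.natDegree))
       else 0)

/-- The resultant of two polynomials: the determinant of their Sylvester matrix. -/
noncomputable def resultant {R : Type*} [CommRing R] (f g : R[X]) : R :=
  (sylvesterMatrix f g).det

/-- The discriminant `δ_f := (−1)^{d(d−1)/2} · res_x(f, f′)` of a polynomial `f ∈ ℤ[x]`. -/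
noncomputable def polyDisc (f : Polynomial ℤ) : ℤ :=
  (-1) ^ (f.natDegree * (f.natDegree - 1) / 2) * _root_.resultant f (derivative f)

/-!
Reducing a Bézout identity `f' * a + f * b = r`, `r = res(f', f)`, modulo `p` shows that `f̄` is
separable. For the degrees, the norm of `f'(θ) * a(θ) = r` gives `m * disc(1, θ, …) = r ^ d` with
`m ∈ ℤ`; since `disc(1, θ, …) • 𝓞_K ⊆ ℤ[θ]`, with `c = r ^ d` every root `α ∈ K` of `f` has
`c * α ∈ ℤ[θ] ≅ ℤ[x]/(f)`. So `f` times a power of `c` is a product of linear factors `c X - c α`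
already over `ℤ[x]/(f)`, and sending `x` to a root of an irreducible factor `g` of `f̄`, where `c`
is a unit, shows that `f̄` splits over `𝔽_p[x]/(g)`. Each irreducible factor `h` of `f̄` then has a
root in this field of degree `deg g`, so `deg h ∣ deg g`, and by symmetry the degrees agree.
-/

theorem resultant_eq_polynomial_resultant {R : Type*} [CommRing R] (f g : R[X]) :
    _root_.resultant f g = Polynomial.resultant g f := by
  have coeff_ite (p : R[X]) (i j : ℕ) : (if j ≤ i then p.coeff (i - j) else 0) =
      if j ≤ i ∧ i ≤ j + p.natDegree then p.coeff (i - j) else 0 := by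
    rw [ite_and]
    split_ifs <;> first | rfl | exact coeff_eq_zero_of_natDegree_lt (by omega)
  refine congrArg Matrix.det (Matrix.ext fun i j => ?_)
  induction j using Fin.addCases with
  | left j =>
    simp only [sylvesterMatrix, Polynomial.sylvester, Matrix.of_apply, Fin.addCases_left,
      Fin.val_castAdd, j.isLt, if_true, Set.mem_Icc, coeff_ite]
  | right j =>
    simp only [sylvesterMatrix, Polynomial.sylvester, Matrix.of_apply, Fin.addCases_right,
      Fin.val_natAdd, Set.mem_Icc, Nat.add_sub_cancel_left, coeff_ite]
    exact if_neg (by omega)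

theorem Polynomial.separable_map_of_resultant_ne_zero {R k : Type*} [CommRing R] [Field k]
    {f : R[X]} (hf : 0 < f.natDegree) (φ : R →+* k) (h : φ (resultant (derivative f) f) ≠ 0) :
    (f.map φ).Separable := by
  obtain ⟨a, b, -, -, hab⟩ :=
    exists_mul_add_mul_eq_C_resultant (derivative f) f le_rfl le_rfl (Or.inr hf.ne')
  set u := φ (resultant (derivative f) f)
  refine ⟨C u⁻¹ * b.map φ, C u⁻¹ * a.map φ, ?_⟩
  have := congrArg (map φ) hab
  rw [Polynomial.map_add, Polynomial.map_mul, Polynomial.map_mul, Polynomial.map_C,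
    ← derivative_map] at this
  rw [mul_assoc, mul_assoc, ← mul_add, mul_comm (b.map φ), mul_comm (a.map φ), add_comm, this,
    ← C_mul, inv_mul_cancel₀ h, C_1]

theorem Polynomial.map_map_of_int {A L : Type*} [Ring A] [Ring L] (g : ℤ →+* A) (φ : A →+* L)
    {ψ : ℤ →+* L} (f : ℤ[X]) : (f.map g).map φ = f.map ψ := by
  rw [Polynomial.map_map, RingHom.ext_int (φ.comp g) ψ]

theorem Polynomial.Splits.map_of_mul_roots_mem_range {A K F : Type*} [CommRing A] [Field K]
    [Field F] {j : A →+* K} (hj : Function.Injective j) (ψ : A →+* F) {q : A[X]} (hq : q.Monic)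
    (hs : (q.map j).Splits) {u : A} (hu : ψ u ≠ 0)
    (hroots : ∀ α ∈ (q.map j).roots, j u * α ∈ j.range) : (q.map ψ).Splits := by
  have hju : IsUnit (j u) := by
    refine isUnit_iff_ne_zero.mpr fun h => hu ?_
    rw [hj (h.trans (map_zero j).symm), map_zero]
  -- scaling the roots by `u` moves them into `A`
  have hscaled : (q.scaleRoots u).Splits := by
    refine Splits.of_splits_map_of_injective hj ?_ ?_ <;>
      rw [map_scaleRoots _ _ _ (by simp [hq.leadingCoeff])]
    · exact hs.scaleRoots _
    · rw [roots_scaleRoots _ hju]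
      exact Multiset.forall_mem_map_iff.mpr hroots
  have hmapped := hscaled.map ψ
  rw [map_scaleRoots _ _ _ (by simp [hq.leadingCoeff])] at hmapped
  simpa [← scaleRoots_mul, mul_inv_cancel₀ hu] using hmapped.scaleRoots (ψ u)⁻¹

theorem Polynomial.natDegree_dvd_of_splits_map_adjoinRoot {k : Type*} [Field k] {g h q : k[X]}
    [Fact (Irreducible g)] (hq : q ≠ 0) (hs : (q.map (algebraMap k (AdjoinRoot g))).Splits)
    (hh : Irreducible h) (hhq : h ∣ q) : h.natDegree ∣ g.natDegree := by
  have hsh : (h.map (algebraMap k (AdjoinRoot g))).Splits :=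
    hs.of_dvd (map_ne_zero hq) (map_dvd _ hhq)
  obtain ⟨y, hy⟩ := hsh.exists_eval_eq_zero (by
    rw [degree_map]; exact (degree_pos_of_irreducible hh).ne')
  have hmin := minpoly.eq_of_irreducible (x := y) hh (by rwa [aeval_def, eval₂_eq_eval_map])
  have hg0 : g ≠ 0 := (Fact.out : Irreducible g).ne_zero
  have : Module.Finite k (AdjoinRoot g) := (AdjoinRoot.powerBasis hg0).finite
  rw [← natDegree_mul_C (inv_ne_zero (leadingCoeff_ne_zero.mpr hh.ne_zero)), hmin,
    ← AdjoinRoot.powerBasis_dim hg0, ← (AdjoinRoot.powerBasis hg0).finrank]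
  exact minpoly.degree_dvd (IsIntegral.of_finite k y)

theorem minpoly.eq_of_irreducible_of_monic_of_isIntegrallyClosed {R S : Type*} [CommRing R]
    [IsDomain R] [IsIntegrallyClosed R] [CommRing S] [IsDomain S] [Algebra R S]
    [Module.IsTorsionFree R S] {x : S} {f : R[X]} (hirr : Irreducible f)
    (hroot : Polynomial.aeval x f = 0) (hmonic : f.Monic) : minpoly R x = f := by
  have hint : IsIntegral R x := ⟨f, hmonic, hroot⟩
  obtain ⟨g, hg⟩ := minpoly.isIntegrallyClosed_dvd hint hroot
  have hunit := (hirr.isUnit_or_isUnit hg).resolve_left (minpoly.not_isUnit R x)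
  exact eq_of_monic_of_associated (minpoly.monic hint) hmonic ⟨hunit.unit, hg.symm⟩

theorem exists_int_mul_discr_eq_resultant_pow {K : Type*} [Field K] [NumberField K]
    (pb : PowerBasis ℚ K) {f : ℤ[X]} (hmonic : f.Monic) (hirr : Irreducible f)
    (hroot : aeval pb.gen f = 0) :
    ∃ m : ℤ, m * Algebra.discr ℚ pb.basis =
      ((Polynomial.resultant (derivative f) f : ℤ) : ℚ) ^ Module.finrank ℚ K := by
  set r := Polynomial.resultant (derivative f) f
  set d := Module.finrank ℚ K
  have hint : IsIntegral ℤ pb.gen := ⟨f, hmonic, hroot⟩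
  have hmin : minpoly ℚ pb.gen = f.map (algebraMap ℤ ℚ) := by
    rw [minpoly.isIntegrallyClosed_eq_field_fractions' ℚ hint,
      minpoly.eq_of_irreducible_of_monic_of_isIntegrallyClosed hirr hroot hmonic]
  obtain ⟨a, b, -, -, hab⟩ := exists_mul_add_mul_eq_C_resultant (derivative f) f le_rfl le_rfl
    (Or.inr (hmonic.natDegree_pos.mpr hirr.ne_one).ne')
  have heval : aeval pb.gen (derivative f) * aeval pb.gen a = algebraMap ℚ K r := by
    have := congrArg (aeval pb.gen) hab
    rwa [map_add, map_mul, map_mul, hroot, zero_mul, add_zero, aeval_C, eq_intCast,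
      ← map_intCast (algebraMap ℚ K)] at this
  have ha : IsIntegral ℤ (aeval pb.gen a) :=
    .of_mem_of_fg _ hint.fg_adjoin_singleton _ (aeval_mem_adjoin_singleton ℤ pb.gen)
  obtain ⟨m, hm⟩ := IsIntegrallyClosed.isIntegral_iff.mp (Algebra.isIntegral_norm ℚ ha)
  have hnorm := congrArg (Algebra.norm ℚ) heval
  rw [map_mul, Algebra.norm_algebraMap, ← hm] at hnorm
  refine ⟨(-1) ^ (d * (d - 1) / 2) * m, ?_⟩
  rw [Algebra.discr_powerBasis_eq_norm, hmin, derivative_map, aeval_map_algebraMap, ← hnorm,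
    eq_intCast]
  push_cast
  rw [mul_mul_mul_comm, ← mul_pow, neg_one_mul, neg_neg, one_pow, one_mul, mul_comm]

theorem resultant_pow_mul_mem_adjoin {K : Type*} [Field K] [NumberField K] {f : ℤ[X]}
    (hmonic : f.Monic) (hirr : Irreducible f) {θ : K} (hroot : aeval θ f = 0)
    (hgen : Algebra.adjoin ℚ {θ} = ⊤) {z : K} (hz : IsIntegral ℤ z) :
    ((Polynomial.resultant (derivative f) f : ℤ) : K) ^ Module.finrank ℚ K * z ∈
      Algebra.adjoin ℤ {θ} := by
  have hint : IsIntegral ℤ θ := ⟨f, hmonic, hroot⟩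
  let pb := PowerBasis.ofAdjoinEqTop (hint.tower_top (A := ℚ)) hgen
  obtain ⟨m, hm⟩ := exists_int_mul_discr_eq_resultant_pow pb hmonic hirr hroot
  have hmem := Algebra.discr_mul_isIntegral_mem_adjoin ℚ (B := pb) hint hz
  have hscale : ((Polynomial.resultant (derivative f) f : ℤ) : K) ^ Module.finrank ℚ K * z =
      m • Algebra.discr ℚ pb.basis • z := by
    rw [← map_intCast (algebraMap ℚ K), ← map_pow, ← hm, map_mul, map_intCast, mul_assoc,
      ← Algebra.smul_def, zsmul_eq_mul]
  rw [hscale]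
  exact Subalgebra.zsmul_mem _ hmem m

theorem splits_map_of_aeval_eq_zero_of_resultant_ne_zero {K F : Type*} [Field K] [NumberField K]
    [Field F] {f : ℤ[X]} (hmonic : f.Monic) (hirr : Irreducible f) {θ : K}
    (hroot : aeval θ f = 0) (hgen : Algebra.adjoin ℚ {θ} = ⊤)
    (hsplit : (f.map (algebraMap ℤ K)).Splits) {t : F} (ht : aeval t f = 0)
    (hres : ((Polynomial.resultant (derivative f) f : ℤ) : F) ≠ 0) :
    (f.map (algebraMap ℤ F)).Splits := by
  have hint : IsIntegral ℤ θ := ⟨f, hmonic, hroot⟩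
  let j : AdjoinRoot f →+* K := AdjoinRoot.lift (algebraMap ℤ K) θ hroot
  have hj : Function.Injective j := by
    refine (injective_iff_map_eq_zero j).mpr fun x hx => ?_
    obtain ⟨P, rfl⟩ := AdjoinRoot.mk_surjective x
    rw [AdjoinRoot.mk_eq_zero,
      ← minpoly.eq_of_irreducible_of_monic_of_isIntegrallyClosed hirr hroot hmonic,
      ← minpoly.isIntegrallyClosed_dvd_iff hint]
    exact hx
  rw [← map_map_of_int (algebraMap ℤ (AdjoinRoot f)) (AdjoinRoot.lift (algebraMap ℤ F) t ht)]
  refine Splits.map_of_mul_roots_mem_range hj _ (hmonic.map _) (by rwa [map_map_of_int])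
    (u := ((Polynomial.resultant (derivative f) f ^ Module.finrank ℚ K : ℤ) : AdjoinRoot f))
    ?_ ?_
  · simpa using pow_ne_zero _ hres
  · rw [map_map_of_int]
    intro α hα
    have hαroot : aeval α f = 0 := by
      rw [← eval_map_algebraMap]; exact (mem_roots'.mp hα).2
    obtain ⟨P, hP⟩ := Algebra.adjoin_singleton_eq_range_aeval ℤ θ ▸
      resultant_pow_mul_mem_adjoin hmonic hirr hroot hgen ⟨f, hmonic, hαroot⟩
    exact ⟨AdjoinRoot.mk f P, by rw [map_intCast, Int.cast_pow, ← hP]; rfl⟩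

theorem reduction_squarefree_and_factors_same_degree_general {K : Type*} [Field K] [NumberField K]
    (f : Polynomial ℤ) (hmonic : f.Monic) (hirr : Irreducible f)
    (θ : 𝓞 K) (hroot : Polynomial.aeval θ f = 0)
    (hgen : Algebra.adjoin ℚ {(θ : K)} = ⊤)
    (hsplit : Polynomial.Splits ((f.map (Int.castRingHom ℚ)).map (algebraMap ℚ K)))
    (p : ℕ) (hp : p.Prime) (hpd : ¬ ((p : ℤ) ∣ polyDisc f)) :
    Squarefree (f.map (Int.castRingHom (ZMod p))) ∧
      ∀ g₁ g₂ : Polynomial (ZMod p), g₁.Monic → g₂.Monic →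
        Irreducible g₁ → Irreducible g₂ →
        g₁ ∣ f.map (Int.castRingHom (ZMod p)) → g₂ ∣ f.map (Int.castRingHom (ZMod p)) →
        g₁.natDegree = g₂.natDegree := by
  have := Fact.mk hp
  have hres : ((Polynomial.resultant (derivative f) f : ℤ) : ZMod p) ≠ 0 := by
    rw [Ne, ZMod.intCast_zmod_eq_zero_iff_dvd, ← resultant_eq_polynomial_resultant]
    exact fun h => hpd (h.mul_left _)
  set fbar := f.map (Int.castRingHom (ZMod p))
  have hsplits (g : (ZMod p)[X]) (hg : Irreducible g) (hgf : g ∣ fbar) :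
      (fbar.map (algebraMap (ZMod p) (AdjoinRoot g))).Splits := by
    have := Fact.mk hg
    rw [map_map_of_int (ψ := algebraMap ℤ (AdjoinRoot g))]
    refine splits_map_of_aeval_eq_zero_of_resultant_ne_zero hmonic hirr (θ := (θ : K))
      (by rw [aeval_algebraMap_apply, hroot, map_zero]) hgen (by rwa [map_map_of_int] at hsplit)
      (t := AdjoinRoot.root g) ?_ ?_
    · rw [← aeval_map_algebraMap (ZMod p), AdjoinRoot.aeval_eq, AdjoinRoot.mk_eq_zero]
      exact hgf
    · rw [← map_intCast (algebraMap (ZMod p) (AdjoinRoot g))]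
      exact (_root_.map_ne_zero _).mpr hres
  have hf0 : fbar ≠ 0 := (hmonic.map _).ne_zero
  refine ⟨(separable_map_of_resultant_ne_zero (hmonic.natDegree_pos.mpr hirr.ne_one) _
    hres).squarefree, fun g₁ g₂ _ _ hg₁ hg₂ hg₁f hg₂f => ?_⟩
  have := Fact.mk hg₁
  have := Fact.mk hg₂
  exact Nat.dvd_antisymm
    (natDegree_dvd_of_splits_map_adjoinRoot hf0 (hsplits g₂ hg₂ hg₂f) hg₁ hg₁f)
    (natDegree_dvd_of_splits_map_adjoinRoot hf0 (hsplits g₁ hg₁ hg₁f) hg₂ hg₂f)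

/-- If `f ∈ ℤ[x]` is monic and irreducible of degree `d ≥ 2`, splits into linear factors
over `K := ℚ(θ)` (i.e. `f` is Galois), and `p` is a prime not dividing `δ_f`, then the
reduction `f̄ ∈ 𝔽_p[x]` is squarefree and all its monic irreducible factors have the
same degree. -/
theorem reduction_squarefree_and_factors_same_degree {K : Type*} [Field K] [NumberField K]
    (f : Polynomial ℤ) (hmonic : f.Monic) (hirr : Irreducible f) (hdeg : 2 ≤ f.natDegree)
    (θ : 𝓞 K) (hroot : Polynomial.aeval θ f = 0)
    (hgen : Algebra.adjoin ℚ {(θ : K)} = ⊤)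
    (hsplit : Polynomial.Splits ((f.map (Int.castRingHom ℚ)).map (algebraMap ℚ K)))
    (p : ℕ) (hp : p.Prime) (hpd : ¬ ((p : ℤ) ∣ polyDisc f)) :
    Squarefree (f.map (Int.castRingHom (ZMod p))) ∧
      ∀ g₁ g₂ : Polynomial (ZMod p), g₁.Monic → g₂.Monic →
        Irreducible g₁ → Irreducible g₂ →
        g₁ ∣ f.map (Int.castRingHom (ZMod p)) → g₂ ∣ f.map (Int.castRingHom (ZMod p)) →
        g₁.natDegree = g₂.natDegree :=
  reduction_squarefree_and_factors_same_degree_general f hmonic hirr θ hroot hgen hsplit p hp hpd
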